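/- Suppose 0 < ε < p < 1/2, so that K > J > 0. Then sup{ |A'(w)| : |w| ∈ [K−J, K+J] } = sinh(2J)/(cosh(2J) + cosh(2K−2J)) = ε(1−ε)·|1−2p| / ((p−ε)² + ε(1−ε)) =: ρ*(p,ε), and ρ*(p,ε) < |1−2p|. -/
import Mathlib


/-- Suppose `0 < ε < p < 1/2`, so that `K > J > 0`. Then
`sup{ |A'(w)| : |w| ∈ [K−J, K+J] } = sinh(2J)/(cosh(2J) + cosh(2K−2J))
  = ε(1−ε)·|1−2p| / ((p−ε)² + ε(1−ε)) =: ρ*(p,ε)`, and `ρ*(p,ε) < |1−2p|`.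
Here `A'` is the derivative of `A`, given by `A'(w) = sinh(2J)/(cosh(2J)+cosh(2w))`. -/
theorem stmt_8 (p ε : ℝ) (hε0 : 0 < ε) (hεp : ε < p) (hp : p < 1 / 2)
    (J K : ℝ)
    (hJ : J = (1 / 2) * Real.log ((1 - p) / p))
    (hK : K = (1 / 2) * Real.log ((1 - ε) / ε))
    (A' : ℝ → ℝ)
    (hA' : ∀ w, A' w = Real.sinh (2 * J) / (Real.cosh (2 * J) + Real.cosh (2 * w))) :
    sSup ((fun w => |A' w|) '' {w : ℝ | |w| ∈ Set.Icc (K - J) (K + J)})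
        = Real.sinh (2 * J) / (Real.cosh (2 * J) + Real.cosh (2 * K - 2 * J))
    ∧ Real.sinh (2 * J) / (Real.cosh (2 * J) + Real.cosh (2 * K - 2 * J))
        = ε * (1 - ε) * |1 - 2 * p| / ((p - ε) ^ 2 + ε * (1 - ε))
    ∧ ε * (1 - ε) * |1 - 2 * p| / ((p - ε) ^ 2 + ε * (1 - ε)) < |1 - 2 * p| := by
  have hp0 : 0 < p := hε0.trans hεp
  have hp1 : p < 1 := by linarith
  have hε1 : ε < 1 := by linarith
  have hppos : (0:ℝ) < (1 - p) / p := div_pos (by linarith) hp0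
  have hεpos : (0:ℝ) < (1 - ε) / ε := div_pos (by linarith) hε0
  have h2J : 2 * J = Real.log ((1 - p) / p) := by rw [hJ]; ring
  have h2K : 2 * K = Real.log ((1 - ε) / ε) := by rw [hK]; ring
  have hJpos : 0 < J := by
    have h1 : (1:ℝ) < (1 - p) / p := (one_lt_div hp0).2 (by linarith)
    have := Real.log_pos h1
    rw [← h2J] at this; linarith
  have hJK : J < K := by
    have hlt : (1 - p) / p < (1 - ε) / ε := by
      rw [div_lt_div_iff₀ hp0 hε0]; nlinarith
    have := Real.log_lt_log hppos hlt
    rw [← h2J, ← h2K] at this; linarith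
  have he2J : Real.exp (2 * J) = (1 - p) / p := by rw [h2J, Real.exp_log hppos]
  have he2K : Real.exp (2 * K) = (1 - ε) / ε := by rw [h2K, Real.exp_log hεpos]
  have hsinhpos : 0 < Real.sinh (2 * J) := Real.sinh_pos_iff.2 (by linarith)
  have hS : 0 < (p - ε) ^ 2 + ε * (1 - ε) := by nlinarith
  -- first equality: it's the greatest element
  have hgreat : IsGreatest ((fun w => |A' w|) '' {w : ℝ | |w| ∈ Set.Icc (K - J) (K + J)})
      (Real.sinh (2 * J) / (Real.cosh (2 * J) + Real.cosh (2 * K - 2 * J))) := by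
    constructor
    · refine ⟨K - J, ?_, ?_⟩
      · have : |K - J| = K - J := abs_of_nonneg (by linarith)
        simp only [Set.mem_setOf_eq, this, Set.mem_Icc]
        constructor <;> linarith
      · have h2 : 2 * (K - J) = 2 * K - 2 * J := by ring
        simp only [hA', h2]
        exact abs_of_nonneg (div_nonneg hsinhpos.le
          (by positivity))
    · rintro x ⟨w, hw, rfl⟩
      simp only [Set.mem_setOf_eq, Set.mem_Icc] at hw
      simp only [hA']
      rw [abs_of_nonneg (div_nonneg hsinhpos.le (by positivity))]
      have hcosh : Real.cosh (2 * K - 2 * J) ≤ Real.cosh (2 * w) := by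
        rw [Real.cosh_le_cosh]
        have h1 : |2 * K - 2 * J| = 2 * K - 2 * J := abs_of_nonneg (by linarith)
        have h2 : |2 * w| = 2 * |w| := by rw [abs_mul]; norm_num
        rw [h1, h2]; linarith [hw.1]
      gcongr
  refine ⟨hgreat.csSup_eq, ?_, ?_⟩
  · -- algebraic identity
    have hne : (p:ℝ) ≠ 0 := hp0.ne'
    have hεne : (ε:ℝ) ≠ 0 := hε0.ne'
    have h1 : (1:ℝ) - p ≠ 0 := by linarith
    have h2 : (1:ℝ) - ε ≠ 0 := by linarith
    have he2Jn : Real.exp (-(2 * J)) = p / (1 - p) := by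
      rw [Real.exp_neg, he2J, inv_div]
    have hd : 2 * K - 2 * J = 2 * K + -(2 * J) := by ring
    have he : Real.exp (2 * K - 2 * J) = ((1 - ε) * p) / (ε * (1 - p)) := by
      rw [hd, Real.exp_add, he2K, he2Jn]; field_simp
    have hen : Real.exp (-(2 * K - 2 * J)) = (ε * (1 - p)) / ((1 - ε) * p) := by
      rw [Real.exp_neg, he, inv_div]
    have habs : |1 - 2 * p| = 1 - 2 * p := abs_of_pos (by linarith)
    have hsinh : Real.sinh (2 * J) = (1 - 2 * p) / (2 * p * (1 - p)) := by
      rw [Real.sinh_eq, he2J, he2Jn]; field_simp; ring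
    have hcoshsum : Real.cosh (2 * J) + Real.cosh (2 * K - 2 * J)
        = ((p - ε) ^ 2 + ε * (1 - ε)) / (2 * p * (1 - p) * ε * (1 - ε)) := by
      rw [Real.cosh_eq, Real.cosh_eq, he2J, he2Jn, he, hen]
      field_simp
      ring
    rw [hsinh, hcoshsum, habs, div_div_div_eq]
    rw [div_eq_div_iff (by positivity) (by positivity)]
    ring
  · rw [div_lt_iff₀ hS, abs_of_pos (show (0:ℝ) < 1 - 2 * p by linarith)]
    have hpe : 0 < (p - ε) ^ 2 := pow_pos (by linarith) 2
    nlinarith
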